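/- arXiv:2211.05481 — 11 statements merged into one kernel-verified Lean document; each statement's English description precedes it below -/
import Mathlib

section
/- For every real number x ≥ 0, the function H(x) = ln(cosh x) satisfies (1/2)·x·tanh(x) ≤ ln(cosh x) ≤ x·tanh(x). -/
/-!
Both differences `x tanh x - log cosh x` and `log cosh x - x tanh x / 2` vanish at `0` and are
even, so it suffices that they increase on `[0, ∞)`. Their derivatives are `x / cosh² x` and
`(sinh x cosh x - x) / (2 cosh² x)`, both nonnegative there since `2x ≤ sinh 2x`.
-/

open Real Set

lemma monotoneOn_Ici_of_hasDerivAt {f f' : ℝ → ℝ} {a : ℝ}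
    (hf : ∀ x, HasDerivAt f (f' x) x) (hf' : ∀ x, a < x → 0 ≤ f' x) : MonotoneOn f (Ici a) :=
  monotoneOn_of_hasDerivWithinAt_nonneg (convex_Ici a)
    (fun x _ ↦ (hf x).continuousAt.continuousWithinAt) (fun x _ ↦ (hf x).hasDerivWithinAt)
    (fun x hx ↦ hf' x (by simpa using hx))

lemma hasDerivAt_log_cosh (x : ℝ) : HasDerivAt (fun y ↦ log (cosh y)) (tanh x) x := by
  simpa [tanh_eq_sinh_div_cosh] using (hasDerivAt_cosh x).log (cosh_pos x).ne'

lemma hasDerivAt_tanh (x : ℝ) : HasDerivAt tanh (1 / cosh x ^ 2) x := by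
  have h := (hasDerivAt_sinh x).div (hasDerivAt_cosh x) (cosh_pos x).ne'
  rw [show tanh = fun y ↦ sinh y / cosh y from funext tanh_eq_sinh_div_cosh]
  refine h.congr_deriv ?_
  rw [← sq, ← sq, cosh_sq_sub_sinh_sq]

lemma self_le_sinh_mul_cosh {x : ℝ} (hx : 0 ≤ x) : x ≤ sinh x * cosh x := by
  have h : 2 * x ≤ sinh (2 * x) := self_le_sinh_iff.2 (by positivity)
  rw [sinh_two_mul] at h
  linarith

lemma log_cosh_le_mul_tanh_of_nonneg {x : ℝ} (hx : 0 ≤ x) : log (cosh x) ≤ x * tanh x := by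
  have hderiv (y : ℝ) : HasDerivAt (fun y ↦ y * tanh y - log (cosh y)) (y / cosh y ^ 2) y := by
    refine (((hasDerivAt_id y).mul (hasDerivAt_tanh y)).sub
      (hasDerivAt_log_cosh y)).congr_deriv ?_
    simp only [id, one_mul]
    ring
  have hmono := monotoneOn_Ici_of_hasDerivAt hderiv fun y hy ↦ div_nonneg hy.le (by positivity)
  simpa using hmono self_mem_Ici hx hx

lemma half_mul_tanh_le_log_cosh_of_nonneg {x : ℝ} (hx : 0 ≤ x) :
    1 / 2 * x * tanh x ≤ log (cosh x) := by
  have hderiv (y : ℝ) : HasDerivAt (fun y ↦ log (cosh y) - 1 / 2 * y * tanh y)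
      ((sinh y * cosh y - y) / (2 * cosh y ^ 2)) y := by
    refine ((hasDerivAt_log_cosh y).sub
      (((hasDerivAt_id y).const_mul (1 / 2)).mul (hasDerivAt_tanh y))).congr_deriv ?_
    rw [tanh_eq_sinh_div_cosh]
    field_simp [(cosh_pos y).ne']
    simp only [id]
    ring
  have hmono := monotoneOn_Ici_of_hasDerivAt hderiv fun y hy ↦
    div_nonneg (sub_nonneg.2 (self_le_sinh_mul_cosh hy.le)) (by positivity)
  simpa using hmono self_mem_Ici hx hx

lemma log_cosh_le_mul_tanh (x : ℝ) : log (cosh x) ≤ x * tanh x := by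
  rcases le_total 0 x with hx | hx
  · exact log_cosh_le_mul_tanh_of_nonneg hx
  · simpa [tanh_neg] using log_cosh_le_mul_tanh_of_nonneg (neg_nonneg.2 hx)

lemma half_mul_tanh_le_log_cosh (x : ℝ) : 1 / 2 * x * tanh x ≤ log (cosh x) := by
  rcases le_total 0 x with hx | hx
  · exact half_mul_tanh_le_log_cosh_of_nonneg hx
  · simpa [tanh_neg] using half_mul_tanh_le_log_cosh_of_nonneg (neg_nonneg.2 hx)

theorem tanh_log_cosh_bounds_general (x : ℝ) :
    (1 / 2) * x * Real.tanh x ≤ Real.log (Real.cosh x) ∧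
    Real.log (Real.cosh x) ≤ x * Real.tanh x :=
  ⟨half_mul_tanh_le_log_cosh x, log_cosh_le_mul_tanh x⟩

theorem tanh_log_cosh_bounds (x : ℝ) (hx : 0 ≤ x) :
    (1 / 2) * x * Real.tanh x ≤ Real.log (Real.cosh x) ∧
    Real.log (Real.cosh x) ≤ x * Real.tanh x :=
  tanh_log_cosh_bounds_general x
end

section
/- For every real k > 0 and every k₀ with 0 < k₀ < k, there exists c₀ > 0 such that for all c ≥ c₀ and all x ∈ [−k₀, k₀], |k·tanh(c·x)| ≥ |x|. -/
lemma tanh_key (k : ℝ) (hk : 0 < k) (y : ℝ) (hy : 0 ≤ y) (hyk : y < k)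
    (c : ℝ) (hc : c * (k - y) ≥ 1) : k * Real.tanh (c * y) ≥ y := by
  have hky : 0 < k - y := by linarith
  have hcy : c * y * (k - y) ≥ y := by nlinarith
  set t := c * y with ht
  have hE : (0:ℝ) < Real.exp t := Real.exp_pos t
  have hF : (0:ℝ) < Real.exp (-t) := Real.exp_pos (-t)
  have hEF : Real.exp t * Real.exp (-t) = 1 := by
    rw [← Real.exp_add]; simp
  have hE2 : Real.exp t * Real.exp t ≥ 1 + 2 * t := by
    have h := Real.add_one_le_exp (2 * t)
    have : Real.exp (2 * t) = Real.exp t * Real.exp t := by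
      rw [← Real.exp_add]; ring_nf
    linarith [this ▸ h]
  have h1 : (k - y) * (Real.exp t * Real.exp t) ≥ k + y := by nlinarith
  have h2 : (k - y) * Real.exp t ≥ (k + y) * Real.exp (-t) := by nlinarith
  rw [Real.tanh_eq_sinh_div_cosh, ← mul_div_assoc, ge_iff_le,
    le_div_iff₀ (Real.cosh_pos t), Real.sinh_eq, Real.cosh_eq]
  nlinarith
theorem abs_tanh_lower_linear_bound (k k₀ : ℝ) (hk : 0 < k) (hk₀ : 0 < k₀) (hk₀k : k₀ < k) :
    ∃ c₀ : ℝ, 0 < c₀ ∧ ∀ c ≥ c₀, ∀ x ∈ Set.Icc (-k₀) k₀, |k * Real.tanh (c * x)| ≥ |x| := by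
  have hkk : (0:ℝ) < k - k₀ := by linarith
  refine ⟨1 / (k - k₀), by positivity, fun c hc x hx => ?_⟩
  obtain ⟨hx1, hx2⟩ := hx
  have hc0 : 0 < c := lt_of_lt_of_le (by positivity) hc
  have hy : 0 ≤ |x| := abs_nonneg x
  have hyk : |x| < k := by rw [abs_lt]; constructor <;> linarith
  have hck : c * (k - |x|) ≥ 1 := by
    have h1 : (1 / (k - k₀)) * (k - k₀) = 1 := by
      rw [one_div, inv_mul_cancel₀ (by linarith : k - k₀ ≠ 0)]
    have h2 : k - |x| ≥ k - k₀ := by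
      have : |x| ≤ k₀ := abs_le.2 ⟨hx1, hx2⟩
      linarith
    nlinarith
  have key := tanh_key k hk |x| hy hyk c hck
  have habs : |Real.tanh (c * x)| = Real.tanh (c * |x|) := by
    rcases abs_cases x with ⟨h, _⟩ | ⟨h, hneg⟩
    · rw [h, abs_of_nonneg]
      have : 0 ≤ c * x := by nlinarith [h ▸ hy]
      have hs := Real.sinh_nonneg_iff.2 this
      rw [Real.tanh_eq_sinh_div_cosh]
      exact div_nonneg hs (Real.cosh_pos _).le
    · rw [h, show c * -x = -(c*x) by ring, Real.tanh_neg, abs_of_nonpos]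
      have hx0 : x ≤ 0 := by linarith
      have : c * x ≤ 0 := mul_nonpos_of_nonneg_of_nonpos hc0.le hx0
      have hs : Real.sinh (c * x) ≤ 0 := by
        have := Real.sinh_le_sinh.2 this
        rwa [Real.sinh_zero] at this
      rw [Real.tanh_eq_sinh_div_cosh]
      exact div_nonpos_of_nonpos_of_nonneg hs (Real.cosh_pos _).le
  calc |x| ≤ k * Real.tanh (c * |x|) := key
    _ = k * |Real.tanh (c * x)| := by rw [habs]
    _ = |k * Real.tanh (c * x)| := by rw [abs_mul, abs_of_pos hk]
end

section
/- Let z, d ∈ ℝ³ (with the Euclidean structure), let D_m ≥ 0 satisfy |d_i| ≤ D_m for each coordinate i = 1,2,3, and let p > 0. Then ∑_{i=1}^{3} z_i·(d_i − D_m·tanh(z_i/p)) ≤ 3·0.2785·p·D_m = 0.8355·p·D_m. -/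
lemma exp_12785_ge : (3.5907 : ℝ) ≤ Real.exp 1.2785 := by
  have h1 : (∑ i ∈ Finset.range 5, (0.2785:ℝ) ^ i / Nat.factorial i) ≤ Real.exp 0.2785 :=
    Real.sum_le_exp_of_nonneg (by norm_num) 5
  have h2 : (2.7182818283 : ℝ) < Real.exp 1 := Real.exp_one_gt_d9
  have h3 : Real.exp 1.2785 = Real.exp 1 * Real.exp 0.2785 := by
    rw [← Real.exp_add]; norm_num
  have hs : (∑ i ∈ Finset.range 5, (0.2785:ℝ) ^ i / Nat.factorial i) = 507314675986001/384000000000000 := by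
    norm_num [Finset.sum_range_succ, Nat.factorial]
  rw [h3]
  nlinarith [Real.exp_pos (0.2785:ℝ)]

lemma key_t (t : ℝ) (ht : 0 ≤ t) : t ≤ 0.2785 * (Real.exp t + 1) := by
  rcases le_or_gt t 0.2785 with h | h
  · nlinarith [Real.exp_pos t]
  · have h1 : t - 1.2785 + 1 ≤ Real.exp (t - 1.2785) := Real.add_one_le_exp _
    have h2 : Real.exp t = Real.exp (t - 1.2785) * Real.exp 1.2785 := by
      rw [← Real.exp_add]; ring_nf
    have h3 := exp_12785_ge
    have h4 := Real.exp_pos (t - 1.2785)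
    nlinarith

lemma core (y : ℝ) (hy : 0 ≤ y) : y - y * Real.tanh y ≤ 0.2785 := by
  have hc : 0 < Real.cosh y := Real.cosh_pos y
  have hcs : Real.cosh y - Real.sinh y = Real.exp (-y) := Real.cosh_sub_sinh y
  have hcosh : Real.cosh y = (Real.exp y + Real.exp (-y)) / 2 := Real.cosh_eq y
  have hee : Real.exp (-y) * Real.exp y = 1 := by
    rw [← Real.exp_add]; simp
  have h2 : Real.exp (2 * y) = Real.exp y * Real.exp y := by
    rw [← Real.exp_add]; ring_nf
  have hk := key_t (2 * y) (by linarith)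
  have h : y - y * Real.tanh y = y * Real.exp (-y) / Real.cosh y := by
    rw [Real.tanh_eq_sinh_div_cosh, eq_div_iff hc.ne']
    field_simp
    linear_combination y * hcs
  have hmul : 2 * y * Real.exp (-y) ≤ 0.2785 * (Real.exp (2 * y) + 1) * Real.exp (-y) :=
    mul_le_mul_of_nonneg_right hk (Real.exp_pos (-y)).le
  have h5 : Real.exp y * Real.exp y * Real.exp (-y) = Real.exp y := by
    rw [← Real.exp_add, ← Real.exp_add]; ring_nf
  rw [h, div_le_iff₀ hc]
  nlinarith [hmul, h5, h2, hcosh]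

lemma core_all (y : ℝ) : |y| - y * Real.tanh y ≤ 0.2785 := by
  rcases le_or_gt 0 y with h | h
  · rw [abs_of_nonneg h]; exact core y h
  · have := core (-y) (by linarith)
    rw [abs_of_neg h]
    rw [Real.tanh_neg] at this
    linarith [this]

theorem disturbance_compensation_bound (z d : EuclideanSpace ℝ (Fin 3)) (Dm p : ℝ)
    (hDm : 0 ≤ Dm) (hd : ∀ i : Fin 3, |d i| ≤ Dm) (hp : 0 < p) :
    ∑ i : Fin 3, z i * (d i - Dm * Real.tanh (z i / p)) ≤ 0.8355 * p * Dm := by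
  have hterm : ∀ i : Fin 3, z i * (d i - Dm * Real.tanh (z i / p)) ≤ 0.2785 * p * Dm := by
    intro i
    have h1 : z i * d i ≤ |z i| * Dm := by
      calc z i * d i ≤ |z i * d i| := le_abs_self _
        _ = |z i| * |d i| := abs_mul _ _
        _ ≤ |z i| * Dm := by
            exact mul_le_mul_of_nonneg_left (hd i) (abs_nonneg _)
    have h2 : |z i / p| - (z i / p) * Real.tanh (z i / p) ≤ 0.2785 := core_all (z i / p)
    have h3 : |z i| = p * |z i / p| := by
      rw [abs_div, abs_of_pos hp]; field_simp
    have h4 : z i * Real.tanh (z i / p) = p * ((z i / p) * Real.tanh (z i / p)) := by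
      field_simp
    have h5 : |z i| - z i * Real.tanh (z i / p) ≤ 0.2785 * p := by
      rw [h3, h4]
      nlinarith
    nlinarith
  calc ∑ i : Fin 3, z i * (d i - Dm * Real.tanh (z i / p))
      ≤ ∑ i : Fin 3, 0.2785 * p * Dm := Finset.sum_le_sum (fun i _ => hterm i)
    _ = 0.8355 * p * Dm := by simp [Finset.sum_const]; ring
end

section
/- Let q₀ ∈ ℝ and q_v ∈ ℝ³ satisfy q₀² + ‖q_v‖² = 1 and q₀ ≠ 0, and define the linear map F : ℝ³ → ℝ³ by F v = (1/2)(q₀·v + q_v × v). Then F is bijective and the operator norm of its inverse equals 2/|q₀|. -/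
/-!
Since `v ⊥ q × v`, Pythagoras gives `‖q₀ v + q × v‖² = q₀² ‖v‖² + ‖q × v‖² ≥ q₀² ‖v‖²`, with
equality on the kernel of `v ↦ q × v`, which is never trivial (it contains `q`, or everything
if `q = 0`). So `F` is bounded below by `|q₀| / 2` and this bound is attained: the lower bound
makes `F` injective, hence bijective in finite dimension, and the two together pin the norm of
the inverse at `2 / |q₀|`.
-/

/-- The three-dimensional cross product on `EuclideanSpace ℝ (Fin 3)`. -/
noncomputable def cross3 (a b : EuclideanSpace ℝ (Fin 3)) : EuclideanSpace ℝ (Fin 3) :=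
  (WithLp.equiv 2 (Fin 3 → ℝ)).symm
    (crossProduct ((WithLp.equiv 2 (Fin 3 → ℝ)) a) ((WithLp.equiv 2 (Fin 3 → ℝ)) b))

open scoped InnerProductSpace Matrix

theorem ContinuousLinearEquiv.norm_symm_eq_inv_of_bound {𝕜 E F : Type*}
    [NontriviallyNormedField 𝕜] [NormedAddCommGroup E] [NormedAddCommGroup F]
    [NormedSpace 𝕜 E] [NormedSpace 𝕜 F] (e : E ≃L[𝕜] F) {c : ℝ} (hc : 0 < c)
    (hbound : ∀ u, c * ‖u‖ ≤ ‖e u‖) {u : E} (hu : u ≠ 0) (hattain : ‖e u‖ = c * ‖u‖) :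
    ‖(e.symm : F →L[𝕜] E)‖ = c⁻¹ := by
  refine le_antisymm (ContinuousLinearMap.opNorm_le_bound _ (inv_nonneg.2 hc.le) fun w => ?_) ?_
  · rw [le_inv_mul_iff₀ hc]
    simpa using hbound (e.symm w)
  · have hu' : 0 < ‖u‖ := norm_pos_iff.2 hu
    have hle := (e.symm : F →L[𝕜] E).le_opNorm (e u)
    rw [ContinuousLinearEquiv.coe_coe, e.symm_apply_apply, hattain, ← mul_assoc] at hle
    rw [inv_le_iff_one_le_mul₀ hc]
    exact le_of_mul_le_mul_right (by simpa using hle) hu'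

theorem inner_cross3_self (q v : EuclideanSpace ℝ (Fin 3)) : ⟪v, cross3 q v⟫_ℝ = 0 := by
  simp [cross3, EuclideanSpace.inner_eq_star_dotProduct, dotProduct_comm, dot_cross_self]

theorem cross3_self (q : EuclideanSpace ℝ (Fin 3)) : cross3 q q = 0 := by
  simp [cross3, cross_self]

theorem exists_ne_zero_cross3_eq_zero (q : EuclideanSpace ℝ (Fin 3)) :
    ∃ v ≠ 0, cross3 q v = 0 := by
  by_cases hq : q = 0
  · refine ⟨EuclideanSpace.single 0 1, by simp, ?_⟩
    simp [cross3, hq]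
  · exact ⟨q, hq, cross3_self q⟩

theorem abs_mul_norm_le_norm_smul_add_cross3 (q₀ : ℝ) (q v : EuclideanSpace ℝ (Fin 3)) :
    |q₀| * ‖v‖ ≤ ‖q₀ • v + cross3 q v‖ := by
  have horth : ⟪q₀ • v, cross3 q v⟫_ℝ = 0 := by
    rw [real_inner_smul_left, inner_cross3_self, mul_zero]
  rw [← Real.norm_eq_abs, ← norm_smul]
  refine le_of_sq_le_sq ?_ (norm_nonneg _)
  rw [norm_add_sq_real, horth, mul_zero, add_zero]
  exact le_add_of_nonneg_right (sq_nonneg _)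

theorem attitude_jacobian_inverse_norm_general (q₀ : ℝ) (qv : EuclideanSpace ℝ (Fin 3))
    (hq₀ : q₀ ≠ 0)
    (F : EuclideanSpace ℝ (Fin 3) →L[ℝ] EuclideanSpace ℝ (Fin 3))
    (hF : ∀ v, F v = (1 / 2 : ℝ) • (q₀ • v + cross3 qv v)) :
    Function.Bijective F ∧
      ∃ G : EuclideanSpace ℝ (Fin 3) →L[ℝ] EuclideanSpace ℝ (Fin 3),
        (∀ v, G (F v) = v) ∧ (∀ v, F (G v) = v) ∧ ‖G‖ = 2 / |q₀| := by
  have hc : 0 < |q₀| / 2 := by positivity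
  have hbound : ∀ v, |q₀| / 2 * ‖v‖ ≤ ‖F v‖ := fun v => by
    rw [hF, norm_smul, Real.norm_of_nonneg one_half_pos.le, div_mul_eq_mul_div,
      one_div_mul_eq_div]
    gcongr
    exact abs_mul_norm_le_norm_smul_add_cross3 q₀ qv v
  have hinj : Function.Injective F := (injective_iff_map_eq_zero F).2 fun v hv => by
    have hle := hbound v
    rw [hv, norm_zero] at hle
    exact norm_le_zero_iff.1 (nonpos_of_mul_nonpos_right hle hc)
  have hbij : Function.Bijective F := ⟨hinj, LinearMap.injective_iff_surjective.mp hinj⟩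
  let e := (LinearEquiv.ofBijective F.toLinearMap hbij).toContinuousLinearEquiv
  obtain ⟨u, hu, hqu⟩ := exists_ne_zero_cross3_eq_zero qv
  refine ⟨hbij, e.symm, e.symm_apply_apply, e.apply_symm_apply, ?_⟩
  rw [← inv_div]
  refine e.norm_symm_eq_inv_of_bound hc hbound hu ?_
  change ‖F u‖ = _
  rw [hF, hqu, add_zero, norm_smul, norm_smul, Real.norm_of_nonneg one_half_pos.le,
    Real.norm_eq_abs]
  ring

theorem attitude_jacobian_inverse_norm (q₀ : ℝ) (qv : EuclideanSpace ℝ (Fin 3))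
    (hunit : q₀ ^ 2 + ‖qv‖ ^ 2 = 1) (hq₀ : q₀ ≠ 0)
    (F : EuclideanSpace ℝ (Fin 3) →L[ℝ] EuclideanSpace ℝ (Fin 3))
    (hF : ∀ v, F v = (1 / 2 : ℝ) • (q₀ • v + cross3 qv v)) :
    Function.Bijective F ∧
      ∃ G : EuclideanSpace ℝ (Fin 3) →L[ℝ] EuclideanSpace ℝ (Fin 3),
        (∀ v, G (F v) = v) ∧ (∀ v, F (G v) = v) ∧ ‖G‖ = 2 / |q₀| :=
  attitude_jacobian_inverse_norm_general q₀ qv hq₀ F hF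
end

section
/- Let C > β > 0, b > 0, s ≥ 0, m ≥ 0, D₀ ≥ 0, let t₀ ≤ t₁, and let V : ℝ → ℝ be differentiable with V'(t) ≤ −C·V(t) + (1/(2b))·(s·e^{−βt} + m) + D₀ for all t ∈ [t₀, t₁]. Then for all t ∈ [t₀, t₁]: V(t) ≤ V(t₀)·e^{−C(t−t₀)} + (s/(2b(C−β)))·(e^{−βt} − e^{−βt₀}·e^{−C(t−t₀)}) + ((D₀ + m/(2b))/C)·(1 − e^{−C(t−t₀)}). -/
/-!
The right-hand side is the solution `W` of the linear equation `y' = -C y + p e^{-βt} + q` with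
`W t₀ = V t₀`, where `p = s/(2b)` and `q = D₀ + m/(2b)`. Since `V` is a sub-solution of the same
equation, Grönwall's inequality applied to `V - W` gives `V ≤ W`.
-/

open Set Real

theorem le_of_hasDerivWithinAt_le_linear {V W V' g : ℝ → ℝ} {K a b : ℝ}
    (hV : ContinuousOn V (Icc a b)) (hW : ContinuousOn W (Icc a b))
    (hV' : ∀ t ∈ Ico a b, HasDerivWithinAt V (V' t) (Ici t) t)
    (hW' : ∀ t ∈ Ico a b, HasDerivWithinAt W (K * W t + g t) (Ici t) t)
    (hsub : ∀ t ∈ Ico a b, V' t ≤ K * V t + g t) (ha : V a ≤ W a) :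
    ∀ t ∈ Icc a b, V t ≤ W t := by
  intro t ht
  -- Grönwall for `V - W`, with zero initial gap and zero forcing, whose bound vanishes identically.
  have hgap := le_gronwallBound_of_liminf_deriv_right_le (K := K) (ε := 0) (hV.sub hW)
    (fun x hx _ hr => ((hV' x hx).sub (hW' x hx)).liminf_right_slope_le hr) (sub_nonpos.2 ha)
    (fun x hx => by simp only [Pi.sub_apply]; linarith [hsub x hx]) t ht
  rw [gronwallBound_ε0_δ0] at hgap
  exact sub_nonpos.1 hgap

noncomputable def expForcedSolution (C β p q t₀ y₀ : ℝ) (t : ℝ) : ℝ :=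
  y₀ * exp (-C * (t - t₀)) + p / (C - β) * (exp (-β * t) - exp (-β * t₀) * exp (-C * (t - t₀)))
    + q / C * (1 - exp (-C * (t - t₀)))

@[simp]
theorem expForcedSolution_self (C β p q t₀ y₀ : ℝ) :
    expForcedSolution C β p q t₀ y₀ t₀ = y₀ := by
  simp [expForcedSolution]

theorem hasDerivAt_expForcedSolution {C β : ℝ} (hC : C ≠ 0) (hCβ : C ≠ β) (p q t₀ y₀ t : ℝ) :
    HasDerivAt (expForcedSolution C β p q t₀ y₀)
      (-C * expForcedSolution C β p q t₀ y₀ t + (p * exp (-β * t) + q)) t := by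
  have hdecay : HasDerivAt (fun t => exp (-C * (t - t₀))) (exp (-C * (t - t₀)) * -C) t := by
    simpa using (((hasDerivAt_id t).sub_const t₀).const_mul (-C)).exp
  have hforce : HasDerivAt (fun t => exp (-β * t)) (exp (-β * t) * -β) t := by
    simpa using ((hasDerivAt_id t).const_mul (-β)).exp
  have hCβ' : C - β ≠ 0 := sub_ne_zero.2 hCβ
  refine (((hdecay.const_mul y₀).add
    ((hforce.sub (hdecay.const_mul (exp (-β * t₀)))).const_mul (p / (C - β)))).add
      (((hasDerivAt_const t 1).sub hdecay).const_mul (q / C))).congr_deriv ?_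
  simp only [expForcedSolution]
  field_simp
  ring

theorem comparison_lemma_exponential_bound_general (C β b s m D₀ t₀ t₁ : ℝ)
    (hβ : 0 < β) (hCβ : β < C) (V : ℝ → ℝ) (hV : Differentiable ℝ V)
    (hV' : ∀ t ∈ Set.Icc t₀ t₁,
      deriv V t ≤ -C * V t + 1 / (2 * b) * (s * Real.exp (-β * t) + m) + D₀) :
    ∀ t ∈ Set.Icc t₀ t₁,
      V t ≤ V t₀ * Real.exp (-C * (t - t₀))
        + s / (2 * b * (C - β)) *
            (Real.exp (-β * t) - Real.exp (-β * t₀) * Real.exp (-C * (t - t₀)))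
        + (D₀ + m / (2 * b)) / C * (1 - Real.exp (-C * (t - t₀))) := by
  set W := expForcedSolution C β (s / (2 * b)) (D₀ + m / (2 * b)) t₀ (V t₀)
  have hW : ∀ t, HasDerivAt W (-C * W t + (s / (2 * b) * exp (-β * t) + (D₀ + m / (2 * b)))) t :=
    hasDerivAt_expForcedSolution (hβ.trans hCβ).ne' hCβ.ne' _ _ _ _
  intro t ht
  have hcomp := le_of_hasDerivWithinAt_le_linear hV.continuous.continuousOn
    (fun x _ => (hW x).continuousAt.continuousWithinAt)
    (fun x _ => (hV x).hasDerivAt.hasDerivWithinAt) (fun x _ => (hW x).hasDerivWithinAt)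
    (fun x hx => (hV' x (Ico_subset_Icc_self hx)).trans_eq (by ring))
    (expForcedSolution_self ..).ge t ht
  simpa only [W, expForcedSolution, div_div] using hcomp

theorem comparison_lemma_exponential_bound (C β b s m D₀ t₀ t₁ : ℝ)
    (hβ : 0 < β) (hCβ : β < C) (hb : 0 < b) (hs : 0 ≤ s) (hm : 0 ≤ m) (hD₀ : 0 ≤ D₀)
    (ht : t₀ ≤ t₁) (V : ℝ → ℝ) (hV : Differentiable ℝ V)
    (hV' : ∀ t ∈ Set.Icc t₀ t₁,
      deriv V t ≤ -C * V t + 1 / (2 * b) * (s * Real.exp (-β * t) + m) + D₀) :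
    ∀ t ∈ Set.Icc t₀ t₁,
      V t ≤ V t₀ * Real.exp (-C * (t - t₀))
        + s / (2 * b * (C - β)) *
            (Real.exp (-β * t) - Real.exp (-β * t₀) * Real.exp (-C * (t - t₀)))
        + (D₀ + m / (2 * b)) / C * (1 - Real.exp (-C * (t - t₀))) :=
  comparison_lemma_exponential_bound_general C β b s m D₀ t₀ t₁ hβ hCβ V hV hV'
end

section
/- Let C > β > 0, b > 0, s ≥ 0, m ≥ 0, D₀ ≥ 0, let t₀ ≤ t₁, and set V_∞ = (D₀ + m/(2b))/C. Let V : ℝ → ℝ be differentiable with V'(t) ≤ −C·V(t) + (1/(2b))·(s·e^{−βt} + m) + D₀ for all t ∈ [t₀, t₁], and assume V(t₀) − s·e^{−βt₀}/(2b(C−β)) − V_∞ ≥ 0. Then for all t ∈ [t₀, t₁]: V(t) ≤ (V(t₀) − V_∞)·e^{−β(t−t₀)} + V_∞. -/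
/-!
The target `B t = (V t₀ - V_∞) e^{-β (t - t₀)} + V_∞` is itself a supersolution of the linear
differential inequality: `B' + C B` dominates the forcing term `(s e^{-β t} + m) / (2b) + D₀`
exactly when `(C - β) (V t₀ - V_∞) ≥ s e^{-β t₀} / (2b)`, which is the initial-gap hypothesis.
A comparison principle for `f' + C f ≤ B' + C B`, obtained from the fencing theorem after
multiplying by the integrating factor `e^{C x}`, then gives `V ≤ B`.
-/

open Set Real

theorem image_le_of_deriv_add_mul_le {f f' B B' : ℝ → ℝ} {a b : ℝ} (C : ℝ)
    (hf : ContinuousOn f (Icc a b)) (hf' : ∀ x ∈ Ico a b, HasDerivWithinAt f (f' x) (Ici x) x)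
    (hB : ContinuousOn B (Icc a b)) (hB' : ∀ x ∈ Ico a b, HasDerivWithinAt B (B' x) (Ici x) x)
    (ha : f a ≤ B a) (bound : ∀ x ∈ Ico a b, f' x + C * f x ≤ B' x + C * B x) :
    ∀ ⦃x⦄, x ∈ Icc a b → f x ≤ B x := by
  have hexp : ∀ x, HasDerivWithinAt (fun y => exp (C * y)) (exp (C * x) * C) (Ici x) x :=
    fun x => (((hasDerivAt_id x).const_mul C).exp.congr_deriv (by simp)).hasDerivWithinAt
  have hweighted := image_le_of_deriv_right_le_deriv_boundary
    (f := fun y => exp (C * y) * f y) (B := fun y => exp (C * y) * B y)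
    (by fun_prop) (fun x hx => (hexp x).mul (hf' x hx)) (by gcongr)
    (by fun_prop) (fun x hx => (hexp x).mul (hB' x hx))
    (fun x hx => by
      have := mul_le_mul_of_nonneg_left (bound x hx) (exp_pos (C * x)).le
      linarith)
  exact fun x hx => le_of_mul_le_mul_left (hweighted hx) (exp_pos (C * x))

theorem hasDerivAt_mul_exp_neg_mul_sub_add (w c β t₀ x : ℝ) :
    HasDerivAt (fun t => w * exp (-β * (t - t₀)) + c) (-β * (w * exp (-β * (x - t₀)))) x := by
  have h := (((hasDerivAt_id x).sub_const t₀).const_mul (-β)).exp.const_mul w |>.add_const c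
  exact h.congr_deriv (by simp only [id]; ring)

theorem forcing_le_exp_decay_supersolution {C β b s m D₀ t₀ Vinf V₀ : ℝ}
    (hβ : 0 < β) (hCβ : β < C) (hb : 0 < b) (hVinf : Vinf = (D₀ + m / (2 * b)) / C)
    (hV₀ : 0 ≤ V₀ - s * exp (-β * t₀) / (2 * b * (C - β)) - Vinf) (t : ℝ) :
    1 / (2 * b) * (s * exp (-β * t) + m) + D₀ ≤
      -β * ((V₀ - Vinf) * exp (-β * (t - t₀))) +
        C * ((V₀ - Vinf) * exp (-β * (t - t₀)) + Vinf) := by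
  have hCVinf : C * Vinf = D₀ + m / (2 * b) := by
    rw [hVinf]; field_simp [(hβ.trans hCβ).ne']
  have hsplit : exp (-β * t) = exp (-β * t₀) * exp (-β * (t - t₀)) := by
    rw [← exp_add]; ring_nf
  have hgap : s * exp (-β * t₀) / (2 * b) ≤ (C - β) * (V₀ - Vinf) := by
    have h := (div_le_iff₀ (mul_pos (by positivity) (sub_pos.2 hCβ))).1
      (by linarith : s * exp (-β * t₀) / (2 * b * (C - β)) ≤ V₀ - Vinf)
    rw [div_le_iff₀ (by positivity)]
    linarith
  have := mul_le_mul_of_nonneg_right hgap (exp_pos (-β * (t - t₀))).le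
  rw [hsplit]
  linear_combination this - hCVinf

theorem lyapunov_exponential_convergence_on_interval_general (C β b s m D₀ t₀ t₁ : ℝ)
    (hβ : 0 < β) (hCβ : β < C) (hb : 0 < b)
    (Vinf : ℝ) (hVinf : Vinf = (D₀ + m / (2 * b)) / C)
    (V : ℝ → ℝ) (hV : Differentiable ℝ V)
    (hV' : ∀ t ∈ Set.Icc t₀ t₁,
      deriv V t ≤ -C * V t + 1 / (2 * b) * (s * Real.exp (-β * t) + m) + D₀)
    (hV₀ : 0 ≤ V t₀ - s * Real.exp (-β * t₀) / (2 * b * (C - β)) - Vinf) :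
    ∀ t ∈ Set.Icc t₀ t₁,
      V t ≤ (V t₀ - Vinf) * Real.exp (-β * (t - t₀)) + Vinf := by
  have hB := hasDerivAt_mul_exp_neg_mul_sub_add (V t₀ - Vinf) Vinf β t₀
  refine image_le_of_deriv_add_mul_le C hV.continuous.continuousOn
    (fun x _ => (hV x).hasDerivAt.hasDerivWithinAt)
    (fun x _ => (hB x).continuousAt.continuousWithinAt) (fun x _ => (hB x).hasDerivWithinAt)
    (by simp) (fun x hx => ?_)
  have := forcing_le_exp_decay_supersolution hβ hCβ hb hVinf hV₀ x
  linarith [hV' x (Ico_subset_Icc_self hx)]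

theorem lyapunov_exponential_convergence_on_interval (C β b s m D₀ t₀ t₁ : ℝ)
    (hβ : 0 < β) (hCβ : β < C) (hb : 0 < b) (hs : 0 ≤ s) (hm : 0 ≤ m) (hD₀ : 0 ≤ D₀)
    (ht : t₀ ≤ t₁) (Vinf : ℝ) (hVinf : Vinf = (D₀ + m / (2 * b)) / C)
    (V : ℝ → ℝ) (hV : Differentiable ℝ V)
    (hV' : ∀ t ∈ Set.Icc t₀ t₁,
      deriv V t ≤ -C * V t + 1 / (2 * b) * (s * Real.exp (-β * t) + m) + D₀)
    (hV₀ : 0 ≤ V t₀ - s * Real.exp (-β * t₀) / (2 * b * (C - β)) - Vinf) :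
    ∀ t ∈ Set.Icc t₀ t₁,
      V t ≤ (V t₀ - Vinf) * Real.exp (-β * (t - t₀)) + Vinf :=
  lyapunov_exponential_convergence_on_interval_general C β b s m D₀ t₀ t₁ hβ hCβ hb Vinf hVinf V hV
    hV' hV₀
end

section
/- Let β > 0, M₁ ≥ 0, M₂ ≥ 0, t₀ ∈ ℝ, and let e : ℝ → ℝ³ be differentiable with e(t₀) = 0 and ⟨e(t), e'(t)⟩ ≤ M₁·e^{−β(t−t₀)} + M₂ for all t ≥ t₀. Then for all t ≥ t₀: ‖e(t)‖² ≤ (2M₁/β)·(1 − e^{−β(t−t₀)}) + 2M₂·(t − t₀). -/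
open scoped RealInnerProductSpace

/-! The right-hand side vanishes at `t₀` and its derivative `2 M₁ e^{-β(t-t₀)} + 2 M₂` dominates
`d/dt ‖e t‖² = 2 ⟪e t, e' t⟫`, so the bound follows from the comparison principle for
differential inequalities. -/

theorem norm_sq_le_of_two_inner_deriv_le {F : Type*} [NormedAddCommGroup F]
    [InnerProductSpace ℝ F] {e : ℝ → F} {B B' : ℝ → ℝ} {t₀ : ℝ}
    (he : Differentiable ℝ e) (he₀ : e t₀ = 0) (hB₀ : 0 ≤ B t₀)
    (hB : ∀ t, HasDerivAt B (B' t) t) (hbound : ∀ t ≥ t₀, 2 * ⟪e t, deriv e t⟫ ≤ B' t) :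
    ∀ t ≥ t₀, ‖e t‖ ^ 2 ≤ B t := by
  intro t ht
  have hnorm : ∀ s, HasDerivAt (‖e ·‖ ^ 2) (2 * ⟪e s, deriv e s⟫) s :=
    fun s => (he s).hasDerivAt.norm_sq
  refine image_le_of_deriv_right_le_deriv_boundary (f := (‖e ·‖ ^ 2))
    (fun s _ => (hnorm s).continuousAt.continuousWithinAt)
    (fun s _ => (hnorm s).hasDerivWithinAt) (by simpa [he₀] using hB₀)
    (fun s _ => (hB s).continuousAt.continuousWithinAt)
    (fun s _ => (hB s).hasDerivWithinAt) (fun s hs => hbound s hs.1) ⟨ht, le_rfl⟩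

theorem hasDerivAt_div_mul_one_sub_exp {β : ℝ} (hβ : β ≠ 0) (c t₀ t : ℝ) :
    HasDerivAt (fun s => c / β * (1 - Real.exp (-β * (s - t₀))))
      (c * Real.exp (-β * (t - t₀))) t := by
  have hlin : HasDerivAt (fun s => -β * (s - t₀)) (-β) t := by
    simpa using ((hasDerivAt_id t).sub_const t₀).const_mul (-β)
  refine (((hasDerivAt_const t 1).sub hlin.exp).const_mul (c / β)).congr_deriv ?_
  field_simp
  ring

theorem accumulated_error_integrated_bound_general (β M₁ M₂ t₀ : ℝ)
    (hβ : 0 < β)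
    (e : ℝ → EuclideanSpace ℝ (Fin 3)) (he : Differentiable ℝ e)
    (he₀ : e t₀ = 0)
    (hinner : ∀ t ≥ t₀, ⟪e t, deriv e t⟫ ≤ M₁ * Real.exp (-β * (t - t₀)) + M₂) :
    ∀ t ≥ t₀,
      ‖e t‖ ^ 2 ≤ 2 * M₁ / β * (1 - Real.exp (-β * (t - t₀))) + 2 * M₂ * (t - t₀) := by
  have hB : ∀ t, HasDerivAt
      (fun s => 2 * M₁ / β * (1 - Real.exp (-β * (s - t₀))) + 2 * M₂ * (s - t₀))
      (2 * M₁ * Real.exp (-β * (t - t₀)) + 2 * M₂ * 1) t := fun t =>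
    (hasDerivAt_div_mul_one_sub_exp hβ.ne' _ t₀ t).add
      (((hasDerivAt_id t).sub_const t₀).const_mul _)
  exact norm_sq_le_of_two_inner_deriv_le he he₀ (by simp) hB
    fun t ht => by linarith [hinner t ht]

theorem accumulated_error_integrated_bound (β M₁ M₂ t₀ : ℝ)
    (hβ : 0 < β) (hM₁ : 0 ≤ M₁) (hM₂ : 0 ≤ M₂)
    (e : ℝ → EuclideanSpace ℝ (Fin 3)) (he : Differentiable ℝ e)
    (he₀ : e t₀ = 0)
    (hinner : ∀ t ≥ t₀, ⟪e t, deriv e t⟫ ≤ M₁ * Real.exp (-β * (t - t₀)) + M₂) :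
    ∀ t ≥ t₀,
      ‖e t‖ ^ 2 ≤ 2 * M₁ / β * (1 - Real.exp (-β * (t - t₀))) + 2 * M₂ * (t - t₀) :=
  accumulated_error_integrated_bound_general β M₁ M₂ t₀ hβ e he he₀ hinner
end

section
/- Let β > 0, s > 0, m > 0, M₁ ≥ 0, M₂ ≥ 0, t₀ ∈ ℝ, and let Δ ≥ 0 satisfy (M₁/β)·(1 − e^{−βΔ}) + M₂·Δ ≥ s·e^{−β(t₀+Δ)} + m. Then Δ ≥ (s·e^{−βt₀} + m)/(s·β·e^{−βt₀} + M₁ + M₂). -/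
theorem turn_off_miet_scalar_bound (β s m M₁ M₂ t₀ Δ : ℝ)
    (hβ : 0 < β) (hs : 0 < s) (hm : 0 < m) (hM₁ : 0 ≤ M₁) (hM₂ : 0 ≤ M₂) (hΔ : 0 ≤ Δ)
    (h : M₁ / β * (1 - Real.exp (-β * Δ)) + M₂ * Δ ≥ s * Real.exp (-β * (t₀ + Δ)) + m) :
    Δ ≥ (s * Real.exp (-β * t₀) + m) / (s * β * Real.exp (-β * t₀) + M₁ + M₂) := by
  set E := Real.exp (-β * t₀) with hE
  have hEpos : 0 < E := Real.exp_pos _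
  have hD : 0 < s * β * E + M₁ + M₂ := by positivity
  rw [ge_iff_le, div_le_iff₀ hD]
  -- exp(-βΔ) ≥ 1 - βΔ
  have h1 : 1 - β * Δ ≤ Real.exp (-β * Δ) := by
    have := Real.add_one_le_exp (-β * Δ)
    linarith
  -- upper bound for M₁/β * (1 - exp(-βΔ))
  have h2 : M₁ / β * (1 - Real.exp (-β * Δ)) ≤ M₁ * Δ := by
    have : M₁ / β * (1 - Real.exp (-β * Δ)) ≤ M₁ / β * (β * Δ) := by
      apply mul_le_mul_of_nonneg_left (by linarith) (by positivity)
    calc M₁ / β * (1 - Real.exp (-β * Δ)) ≤ M₁ / β * (β * Δ) := this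
      _ = M₁ * Δ := by field_simp
  -- lower bound for exp(-β(t₀+Δ))
  have h3 : E * (1 - β * Δ) ≤ Real.exp (-β * (t₀ + Δ)) := by
    have : Real.exp (-β * (t₀ + Δ)) = E * Real.exp (-β * Δ) := by
      rw [hE, ← Real.exp_add]; ring_nf
    rw [this]
    exact mul_le_mul_of_nonneg_left h1 hEpos.le
  have key : s * (E * (1 - β * Δ)) + m ≤ (M₁ + M₂) * Δ := by
    have := mul_le_mul_of_nonneg_left h3 hs.le
    nlinarith
  nlinarith
end

section
/- Let β > 0, M₁ ≥ 0, M₂ ≥ 0, s > 0, m > 0, t₀ ∈ ℝ, and let e : ℝ → ℝ³ be differentiable with e(t₀) = 0 and ⟨e(t), e'(t)⟩ ≤ M₁·e^{−β(t−t₀)} + M₂ for all t ≥ t₀. If t₁ ≥ t₀ satisfies ‖e(t₁)‖² ≥ s·e^{−βt₁} + m, then t₁ − t₀ ≥ (s·e^{−βt₀} + m)/(s·β·e^{−βt₀} + 2M₁ + 2M₂). -/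
open scoped RealInnerProductSpace

theorem turn_off_trigger_miet (β M₁ M₂ s m t₀ : ℝ)
    (hβ : 0 < β) (hM₁ : 0 ≤ M₁) (hM₂ : 0 ≤ M₂) (hs : 0 < s) (hm : 0 < m)
    (e : ℝ → EuclideanSpace ℝ (Fin 3)) (he : Differentiable ℝ e)
    (he₀ : e t₀ = 0)
    (hinner : ∀ t ≥ t₀, ⟪e t, deriv e t⟫ ≤ M₁ * Real.exp (-β * (t - t₀)) + M₂)
    (t₁ : ℝ) (ht₁ : t₁ ≥ t₀)
    (htrig : ‖e t₁‖ ^ 2 ≥ s * Real.exp (-β * t₁) + m) :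
    t₁ - t₀ ≥ (s * Real.exp (-β * t₀) + m)
        / (s * β * Real.exp (-β * t₀) + 2 * M₁ + 2 * M₂) := by
  set g : ℝ → ℝ := fun t => (2 * M₁ + 2 * M₂) * t - ⟪e t, e t⟫ with hg
  have hgderiv : ∀ t : ℝ, HasDerivAt g ((2 * M₁ + 2 * M₂) - 2 * ⟪e t, deriv e t⟫) t := by
    intro t
    have h1 : HasDerivAt (fun t => (2 * M₁ + 2 * M₂) * t) (2 * M₁ + 2 * M₂) t := by
      simpa using (hasDerivAt_id t).const_mul (2 * M₁ + 2 * M₂)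
    have h2 : HasDerivAt (fun t => ⟪e t, e t⟫)
        (⟪e t, deriv e t⟫ + ⟪deriv e t, e t⟫) t :=
      (he t).hasDerivAt.inner ℝ (he t).hasDerivAt
    have h2' : HasDerivAt (fun t => ⟪e t, e t⟫) (2 * ⟪e t, deriv e t⟫) t := by
      convert h2 using 1
      rw [real_inner_comm (e t) (deriv e t)]; ring
    exact h1.sub h2'
  have hmono : MonotoneOn g (Set.Icc t₀ t₁) := by
    apply monotoneOn_of_deriv_nonneg (convex_Icc t₀ t₁)
    · exact (Continuous.sub (continuous_const.mul continuous_id)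
        (Continuous.inner he.continuous he.continuous)).continuousOn
    · intro t ht
      exact ((hgderiv t).differentiableAt).differentiableWithinAt
    · intro t ht
      rw [interior_Icc] at ht
      rw [(hgderiv t).deriv]
      have h1 : ⟪e t, deriv e t⟫ ≤ M₁ * Real.exp (-β * (t - t₀)) + M₂ :=
        hinner t ht.1.le
      have h2 : Real.exp (-β * (t - t₀)) ≤ 1 := by
        apply Real.exp_le_one_iff.mpr
        nlinarith [ht.1.le]
      nlinarith
  have hkey : ‖e t₁‖ ^ 2 ≤ (2 * M₁ + 2 * M₂) * (t₁ - t₀) := by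
    have := hmono (Set.left_mem_Icc.mpr ht₁) (Set.right_mem_Icc.mpr ht₁) ht₁
    simp only [hg, he₀, inner_zero_left] at this
    have hn : ⟪e t₁, e t₁⟫ = ‖e t₁‖ ^ 2 := real_inner_self_eq_norm_sq (e t₁)
    nlinarith
  have hexp : Real.exp (-β * t₁) ≥ Real.exp (-β * t₀) * (1 - β * (t₁ - t₀)) := by
    have h1 : 1 - β * (t₁ - t₀) ≤ Real.exp (-(β * (t₁ - t₀))) := by
      have := Real.add_one_le_exp (-(β * (t₁ - t₀)))
      linarith
    have h2 : Real.exp (-β * t₁) = Real.exp (-β * t₀) * Real.exp (-(β * (t₁ - t₀))) := by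
      rw [← Real.exp_add]; ring_nf
    rw [h2]
    have := Real.exp_pos (-β * t₀)
    nlinarith
  have hD : 0 < s * β * Real.exp (-β * t₀) + 2 * M₁ + 2 * M₂ := by
    have := Real.exp_pos (-β * t₀)
    positivity
  rw [ge_iff_le, div_le_iff₀ hD]
  nlinarith [Real.exp_pos (-β * t₀)]
end

section
/- Let β > 0, S₀ ≥ S_∞, S_∞ > V_∞, and define S(t) = (S₀ − S_∞)·e^{−βt} + S_∞. Let t₀ ∈ ℝ and t ≥ t₀, and suppose V(t) ≤ (S(t₀) − V_∞)·e^{−β(t−t₀)} + V_∞. Then S(t) − V(t) ≥ (S_∞ − V_∞)·(1 − e^{−β(t−t₀)}). -/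
theorem performance_gap_lower_bound (β S₀ Sinf Vinf t₀ t : ℝ) (v : ℝ)
    (hβ : 0 < β) (hS₀ : Sinf ≤ S₀) (hSV : Vinf < Sinf) (ht : t₀ ≤ t)
    (S : ℝ → ℝ) (hS : ∀ τ, S τ = (S₀ - Sinf) * Real.exp (-β * τ) + Sinf)
    (hv : v ≤ (S t₀ - Vinf) * Real.exp (-β * (t - t₀)) + Vinf) :
    S t - v ≥ (Sinf - Vinf) * (1 - Real.exp (-β * (t - t₀))) := by
  have key : Real.exp (-β * t₀) * Real.exp (-β * (t - t₀)) = Real.exp (-β * t) := by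
    rw [← Real.exp_add]; ring_nf
  rw [hS t, hS t₀] at *
  nlinarith [Real.exp_pos (-β * (t - t₀)), Real.exp_pos (-β * t)]
end

section
/- Let β > 0, S₀ ≥ S_∞, and define S(t) = (S₀ − S_∞)·e^{−βt} + S_∞. Let a > 0, W ≥ 0, and let δ, N be reals with δ < N. Set B = β·(S₀ − S_∞)·e^{−βt₀} + (a²/2)·W. If t ≥ t₀ satisfies S(t) − δ ≤ (a²/4)·(t − t₀)² + (a²/2)·W·(t − t₀) + (S(t₀) − N), then t − t₀ ≥ (−B + √(B² + a²·(N − δ)))/(a²/2). -/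
/-!
The decaying evaluation function is convex, so it stays above its tangent line at
`t₀`; together with the trigger inequality this gives `N - δ ≤ (a²/4) x² + B x` for `x = t - t₀`.
Since `N - δ > 0`, the quadratic `(a²/4) x² + B x - (N - δ)` has roots of opposite signs, so a
nonnegative `x` at which it is nonnegative lies beyond the positive root.
-/

open Real

theorem tangent_le_mul_exp_neg_mul {c : ℝ} (hc : 0 ≤ c) (β s t : ℝ) :
    c * exp (-β * s) - β * c * exp (-β * s) * (t - s) ≤ c * exp (-β * t) := by
  have hsplit : exp (-β * t) = exp (-β * s) * exp (-(β * (t - s))) := by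
    rw [← exp_add]; ring_nf
  have htangent : 1 - β * (t - s) ≤ exp (-(β * (t - s))) := by
    linarith [add_one_le_exp (-(β * (t - s)))]
  calc c * exp (-β * s) - β * c * exp (-β * s) * (t - s)
      = c * exp (-β * s) * (1 - β * (t - s)) := by ring
    _ ≤ c * exp (-β * s) * exp (-(β * (t - s))) := by gcongr
    _ = c * exp (-β * t) := by rw [hsplit, mul_assoc]

theorem quadratic_pos_root_le {p q r x : ℝ} (hp : 0 < p) (hr : 0 < r) (hx : 0 ≤ x)
    (h : r ≤ p * x ^ 2 + q * x) :
    (-q + √(q ^ 2 + 4 * p * r)) / (2 * p) ≤ x := by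
  set D := √(q ^ 2 + 4 * p * r)
  have hqD : |q| < D := by
    rw [← sqrt_sq_eq_abs]
    exact sqrt_lt_sqrt (sq_nonneg q) (by nlinarith)
  have hD : D ≤ |2 * p * x + q| := by
    rw [← sqrt_sq_eq_abs]
    exact sqrt_le_sqrt (by nlinarith)
  have hvertex : 0 ≤ 2 * p * x + q := by
    by_contra! hneg
    rw [abs_of_neg hneg] at hD
    have : 0 ≤ p * x := by positivity
    linarith [neg_abs_le q]
  rw [div_le_iff₀ (by positivity)]
  linarith [abs_of_nonneg hvertex]

theorem turn_on_miet_scalar_bound_general (β S₀ Sinf a W δ N t₀ t B : ℝ)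
    (hS₀ : Sinf ≤ S₀) (ha : 0 < a) (hδN : δ < N)
    (S : ℝ → ℝ) (hS : ∀ τ, S τ = (S₀ - Sinf) * Real.exp (-β * τ) + Sinf)
    (hB : B = β * (S₀ - Sinf) * Real.exp (-β * t₀) + a ^ 2 / 2 * W)
    (ht : t₀ ≤ t)
    (htrig : S t - δ ≤ a ^ 2 / 4 * (t - t₀) ^ 2 + a ^ 2 / 2 * W * (t - t₀) + (S t₀ - N)) :
    t - t₀ ≥ (-B + Real.sqrt (B ^ 2 + a ^ 2 * (N - δ))) / (a ^ 2 / 2) := by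
  have htangent := tangent_le_mul_exp_neg_mul (sub_nonneg.mpr hS₀) β t₀ t
  have hquad : N - δ ≤ a ^ 2 / 4 * (t - t₀) ^ 2 + B * (t - t₀) := by
    rw [hS, hS] at htrig
    rw [hB]
    linarith
  have hroot := quadratic_pos_root_le (by positivity) (sub_pos.mpr hδN) (sub_nonneg.mpr ht) hquad
  rwa [show 4 * (a ^ 2 / 4) * (N - δ) = a ^ 2 * (N - δ) by ring,
    show 2 * (a ^ 2 / 4) = a ^ 2 / 2 by ring] at hroot

theorem turn_on_miet_scalar_bound (β S₀ Sinf a W δ N t₀ t B : ℝ)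
    (hβ : 0 < β) (hS₀ : Sinf ≤ S₀) (ha : 0 < a) (hW : 0 ≤ W) (hδN : δ < N)
    (S : ℝ → ℝ) (hS : ∀ τ, S τ = (S₀ - Sinf) * Real.exp (-β * τ) + Sinf)
    (hB : B = β * (S₀ - Sinf) * Real.exp (-β * t₀) + a ^ 2 / 2 * W)
    (ht : t₀ ≤ t)
    (htrig : S t - δ ≤ a ^ 2 / 4 * (t - t₀) ^ 2 + a ^ 2 / 2 * W * (t - t₀) + (S t₀ - N)) :
    t - t₀ ≥ (-B + Real.sqrt (B ^ 2 + a ^ 2 * (N - δ))) / (a ^ 2 / 2) :=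
  turn_on_miet_scalar_bound_general β S₀ Sinf a W δ N t₀ t B hS₀ ha hδN S hS hB ht htrig
end
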